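/- arXiv:2505.21718 — 3 statements merged into one kernel-verified Lean document; each statement's English description precedes it below -/
import Mathlib

section
/- Let B be a Garside shadow in (W,S) and let g, g' ∈ W. If ν_B(g) ⪯ g' ⪯ g, then ν_B(g') ⪯ ν_B(g). -/
open CoxeterSystem

variable {ι W : Type} [Group W] {cm : CoxeterMatrix ι}

/-- The right weak order on `W`: `g ⪯ h` iff `ℓ(g) + ℓ(g⁻¹h) = ℓ(h)`. -/
def WLe (cs : CoxeterSystem cm W) (g h : W) : Prop :=
  cs.length g + cs.length (g⁻¹ * h) = cs.length h

/-- `w` is a suffix of `g` if `g = u * w` with `ℓ(g) = ℓ(u) + ℓ(w)`. -/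
def IsSuffixOf (cs : CoxeterSystem cm W) (w g : W) : Prop :=
  ∃ u : W, g = u * w ∧ cs.length g = cs.length u + cs.length w

/-- `j` is the join (least upper bound) of `X` with respect to the right weak order. -/
def IsJoin (cs : CoxeterSystem cm W) (X : Set W) (j : W) : Prop :=
  (∀ x ∈ X, WLe cs x j) ∧ ∀ u : W, (∀ x ∈ X, WLe cs x u) → WLe cs j u

/-- A Garside shadow: a subset of `W` containing all simple reflections, closed under
existing joins and under taking suffixes. -/
def IsGarsideShadow (cs : CoxeterSystem cm W) (B : Set W) : Prop :=
  (∀ i : ι, cs.simple i ∈ B) ∧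
  (∀ X : Set W, X ⊆ B → ∀ j : W, IsJoin cs X j → j ∈ B) ∧
  (∀ b ∈ B, ∀ w : W, IsSuffixOf cs w b → w ∈ B)

/-- `π` is the `B`-projection: `π g` is the join of `{b ∈ B : b ⪯ g}` and lies in `B`. -/
def IsGarsideProjection (cs : CoxeterSystem cm W) (B : Set W) (π : W → W) : Prop :=
  ∀ g : W, π g ∈ B ∧ IsJoin cs {b : W | b ∈ B ∧ WLe cs b g} (π g)

/-- The voracious projection with respect to `π = π_B`: `ν_B(g) = g · π_B(g⁻¹)`. -/
def vor (π : W → W) (g : W) : W := g * π g⁻¹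

/-- The language `L_g`, defined inductively: `L_id = {ε}` and
`L_g = {uv : u ∈ L_{ν_B(g)}, v a minimal length word representing ν_B(g)⁻¹g}`. -/
inductive VorL (cs : CoxeterSystem cm W) (π : W → W) : W → List ι → Prop
  | nil : VorL cs π 1 []
  | step {g : W} {u v : List ι} (hg : g ≠ 1) (hu : VorL cs π (vor π g) u)
      (hv : cs.wordProd v = (vor π g)⁻¹ * g)
      (hmin : v.length = cs.length ((vor π g)⁻¹ * g)) :
      VorL cs π g (u ++ v)

/-- The voracious language `V_B = ⋃_{g ∈ W} L_g`. -/
def VorLang (cs : CoxeterSystem cm W) (π : W → W) : Language ι :=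
  {v : List ι | ∃ g : W, VorL cs π g v}

/-- The reflection `r` separates `g` from `h`. -/
def SepElem (cs : CoxeterSystem cm W) (r g h : W) : Prop :=
  Xor' (cs.length (r * g) < cs.length g) (cs.length (r * h) < cs.length h)

/-- The reflection `r'` separates `g` from the wall of the reflection `r`. -/
def SepWall (cs : CoxeterSystem cm W) (r' g r : W) : Prop :=
  ∀ h : W, (∃ i : ι, r * h = h * cs.simple i) → SepElem cs r' g h

/-- The wall of the reflection `r` is `m`-close to `g`: at most `m` reflections
separate `g` from the wall of `r`. -/
def MClose (cs : CoxeterSystem cm W) (m : ℕ) (g r : W) : Prop :=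
  ∃ F : Finset W, F.card ≤ m ∧
    ∀ r' : W, cs.IsReflection r' → SepWall cs r' g r → r' ∈ F


private lemma wle_trans' (cs : CoxeterSystem cm W) {a b c : W}
    (h1 : WLe cs a b) (h2 : WLe cs b c) : WLe cs a c := by
  unfold WLe at *
  have t1 : cs.length (a⁻¹ * c) ≤ cs.length (a⁻¹ * b) + cs.length (b⁻¹ * c) := by
    have := cs.length_mul_le (a⁻¹ * b) (b⁻¹ * c)
    rwa [show a⁻¹ * b * (b⁻¹ * c) = a⁻¹ * c by group] at this
  have t2 : cs.length c ≤ cs.length a + cs.length (a⁻¹ * c) := by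
    have := cs.length_mul_le a (a⁻¹ * c)
    rwa [show a * (a⁻¹ * c) = c by group] at this
  omega

/-- If `ν_B(g) ⪯ g' ⪯ g` then `ν_B(g') ⪯ ν_B(g)`. -/
theorem vor_monotone [Finite ι] (cs : CoxeterSystem cm W)
    (B : Set W) (hB : IsGarsideShadow cs B)
    (piB : W → W) (hpi : IsGarsideProjection cs B piB)
    (g g' : W) (h1 : WLe cs (vor piB g) g') (h2 : WLe cs g' g) :
    WLe cs (vor piB g') (vor piB g) := by
  set a := piB g⁻¹ with ha
  set b := (vor piB g)⁻¹ * g' with hb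
  obtain ⟨haB, hjoin⟩ := hpi g⁻¹
  -- a ⪯ g⁻¹
  have hag : WLe cs a g⁻¹ := hjoin.2 g⁻¹ (fun x hx => hx.2)
  -- basic length facts
  have hvg : vor piB g = g * a := rfl
  have E1 : cs.length a + cs.length (vor piB g) = cs.length g := by
    have := hag
    unfold WLe at this
    rwa [show a⁻¹ * g⁻¹ = (vor piB g)⁻¹ by rw [hvg]; group, cs.length_inv,
      cs.length_inv] at this
  have E2 : cs.length (vor piB g) + cs.length b = cs.length g' := h1
  have E3 : cs.length g' + cs.length (a * b) = cs.length g := by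
    have := h2
    unfold WLe at this
    rwa [show g'⁻¹ * g = (a * b)⁻¹ by rw [hb, hvg]; group, cs.length_inv] at this
  -- b⁻¹ is a suffix of a, hence b⁻¹ ∈ B
  have hbB : b⁻¹ ∈ B := by
    refine hB.2.2 a haB b⁻¹ ⟨a * b, by group, ?_⟩
    rw [cs.length_inv]; omega
  -- b⁻¹ ⪯ g'⁻¹
  have hbg' : WLe cs b⁻¹ g'⁻¹ := by
    unfold WLe
    rw [show (b⁻¹)⁻¹ * g'⁻¹ = (vor piB g)⁻¹ by rw [hb]; group, cs.length_inv,
      cs.length_inv, cs.length_inv]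
    omega
  obtain ⟨hdB, hjoin'⟩ := hpi g'⁻¹
  set d := piB g'⁻¹ with hd
  have hbd : WLe cs b⁻¹ d := hjoin'.1 b⁻¹ ⟨hbB, hbg'⟩
  have hdg' : WLe cs d g'⁻¹ := hjoin'.2 g'⁻¹ (fun x hx => hx.2)
  -- length of g' * d and g' * b⁻¹ and (b*d)
  have F1 : cs.length d + cs.length (g' * d) = cs.length g' := by
    have := hdg'
    unfold WLe at this
    rwa [show d⁻¹ * g'⁻¹ = (g' * d)⁻¹ by group, cs.length_inv, cs.length_inv] at this
  have F2 : cs.length b + cs.length (b * d) = cs.length d := by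
    have := hbd
    unfold WLe at this
    rwa [show (b⁻¹)⁻¹ * d = b * d by group, cs.length_inv] at this
  -- conclude
  have hvg' : vor piB g' = g' * d := rfl
  have hvgb : vor piB g = g' * b⁻¹ := by rw [hb]; group
  unfold WLe
  rw [hvg', hvgb, show (g' * d)⁻¹ * (g' * b⁻¹) = (b * d)⁻¹ by group, cs.length_inv]
  -- ℓ(g'*b⁻¹) = ℓ(vor g) = ℓ g' - ℓ b
  rw [← hvgb]
  omega
end

section
/- Let B be a Garside shadow in (W,S). Then for every g ∈ W, the language L_g is nonempty and finite, and every word v ∈ L_g has word length equal to ℓ(g) and represents g; consequently, V_B is a geodesic language and every element of W is represented by some word of V_B. -/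
open CoxeterSystem

variable {ι W : Type} [Group W] {cm : CoxeterMatrix ι}

/-!
Let `p = π_B(g⁻¹)`. Since `p ⪯ g⁻¹`, the factorisation `g = ν_B(g) · p⁻¹` is length-additive,
so concatenating a word of `L_{ν_B(g)}` with a reduced word for `p⁻¹` keeps words geodesic.
For `g ≠ 1` some simple reflection `s ⪯ g⁻¹` lies in `B`, hence `s ⪯ p`, so `p ≠ 1` and
`ℓ(ν_B(g)) < ℓ(g)`: induction on length produces a word of `L_g`.
-/

section

variable {cs : CoxeterSystem cm W}

theorem WLe.length_le {g h : W} (hgh : WLe cs g h) : cs.length g ≤ cs.length h :=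
  Nat.le.intro hgh

theorem wLe_simple_iff_isLeftDescent {g : W} {i : ι} :
    WLe cs (cs.simple i) g ↔ cs.IsLeftDescent g i := by
  rw [cs.isLeftDescent_iff, WLe, cs.length_simple, cs.inv_simple, add_comm]

theorem exists_simple_wLe_of_ne_one {g : W} (hg : g ≠ 1) :
    ∃ i : ι, WLe cs (cs.simple i) g := by
  simpa only [wLe_simple_iff_isLeftDescent] using cs.exists_leftDescent_of_ne_one hg

namespace IsGarsideProjection

variable {B : Set W} {π : W → W}

theorem wLe (hpi : IsGarsideProjection cs B π) (g : W) : WLe cs (π g) g :=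
  (hpi g).2.2 g fun _ hb => hb.2

theorem ne_one (hpi : IsGarsideProjection cs B π) (hsimple : ∀ i : ι, cs.simple i ∈ B)
    {g : W} (hg : g ≠ 1) : π g ≠ 1 := by
  obtain ⟨i, hi⟩ := exists_simple_wLe_of_ne_one hg
  have hlen : cs.length (cs.simple i) ≤ cs.length (π g) :=
    ((hpi g).2.1 _ ⟨hsimple i, hi⟩).length_le
  intro hg1
  rw [hg1, cs.length_one, cs.length_simple] at hlen
  omega

end IsGarsideProjection

variable {π : W → W}

theorem inv_vor_mul (g : W) : (vor π g)⁻¹ * g = (π g⁻¹)⁻¹ := by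
  simp [vor]

theorem length_vor_add_length_inv_vor_mul (hle : ∀ g, WLe cs (π g) g) (g : W) :
    cs.length (vor π g) + cs.length ((vor π g)⁻¹ * g) = cs.length g := by
  have h := hle g⁻¹
  rw [WLe, cs.length_inv g, ← cs.length_inv ((π g⁻¹)⁻¹ * g⁻¹)] at h
  rw [inv_vor_mul, cs.length_inv, ← h, vor]
  simp [add_comm]

theorem length_vor_lt (hle : ∀ g, WLe cs (π g) g) (hne : ∀ g ≠ 1, π g ≠ 1) {g : W}
    (hg : g ≠ 1) : cs.length (vor π g) < cs.length g := by
  have hpos : 0 < cs.length ((vor π g)⁻¹ * g) := by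
    rw [inv_vor_mul, cs.length_inv, Nat.pos_iff_ne_zero, Ne, cs.length_eq_zero_iff]
    exact hne _ (inv_ne_one.mpr hg)
  have := length_vor_add_length_inv_vor_mul hle g
  omega

namespace VorL

variable {g : W} {v : List ι}

theorem wordProd_eq (h : VorL cs π g v) : cs.wordProd v = g := by
  induction h with
  | nil => simp
  | step _ _ hv _ ih => rw [cs.wordProd_append, ih, hv, mul_inv_cancel_left]

theorem length_eq (hle : ∀ g, WLe cs (π g) g) (h : VorL cs π g v) : v.length = cs.length g := by
  induction h with
  | nil => simp
  | @step g _ _ _ _ _ hmin ih =>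
    rw [List.length_append, ih, hmin, length_vor_add_length_inv_vor_mul hle g]

theorem exists_of_wLe (hle : ∀ g, WLe cs (π g) g) (hne : ∀ g ≠ 1, π g ≠ 1) (g : W) :
    ∃ v, VorL cs π g v := by
  by_cases hg : g = 1
  · exact ⟨[], hg ▸ nil⟩
  obtain ⟨u, hu⟩ := exists_of_wLe hle hne (vor π g)
  obtain ⟨v, hv, hvg⟩ := cs.exists_isReduced ((vor π g)⁻¹ * g)
  exact ⟨u ++ v, step hg hu hvg.symm (by rw [hvg]; exact hv.symm)⟩
termination_by cs.length g
decreasing_by exact length_vor_lt hle hne hg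

theorem finite_setOf [Finite ι] (hle : ∀ g, WLe cs (π g) g) (g : W) :
    {v : List ι | VorL cs π g v}.Finite :=
  (List.finite_length_eq ι (cs.length g)).subset fun _ hv => length_eq hle hv

end VorL

end

/-- For every `g ∈ W`, the language `L_g` is nonempty and finite, and
every word of `L_g` has length `ℓ(g)` and represents `g`; consequently `V_B` is a geodesic
language and every element of `W` is represented by a word of `V_B`. -/
theorem vorLang_geodesic [Finite ι] (cs : CoxeterSystem cm W)
    (B : Set W) (hB : IsGarsideShadow cs B)
    (piB : W → W) (hpi : IsGarsideProjection cs B piB) :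
    (∀ g : W, {v : List ι | VorL cs piB g v}.Nonempty ∧
      {v : List ι | VorL cs piB g v}.Finite ∧
      ∀ v : List ι, VorL cs piB g v → cs.wordProd v = g ∧ v.length = cs.length g) ∧
    (∀ v ∈ VorLang cs piB, v.length = cs.length (cs.wordProd v)) ∧
    (∀ g : W, ∃ v ∈ VorLang cs piB, cs.wordProd v = g) := by
  have hle := hpi.wLe
  have hne : ∀ g ≠ 1, piB g ≠ 1 := fun _ => hpi.ne_one hB.1
  refine ⟨fun g => ⟨VorL.exists_of_wLe hle hne g, VorL.finite_setOf hle g,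
    fun v hv => ⟨hv.wordProd_eq, hv.length_eq hle⟩⟩, ?_, fun g => ?_⟩
  · rintro v ⟨g, hv⟩
    rw [hv.wordProd_eq, hv.length_eq hle]
  · obtain ⟨v, hv⟩ := VorL.exists_of_wLe hle hne g
    exact ⟨v, ⟨g, hv⟩, hv.wordProd_eq⟩
end

section
/- Let B be a Garside shadow in (W,S), let g ∈ W and s ∈ S with ℓ(gs) < ℓ(g). Then for every k ≥ 0 we have ν_B^{k+1}(g) ⪯ ν_B^{k}(gs) ⪯ ν_B^{k}(g), where ν_B^k denotes the k-fold composition of ν_B (and ν_B^0 is the identity map). -/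
open CoxeterSystem

variable {ι W : Type} [Group W] {cm : CoxeterMatrix ι}

/-!
`ν_B(g) = g · π_B(g⁻¹)` is a prefix of `g`, and for `b, b' ⪯ c` one has `b ⪯ b'` iff
`c⁻¹b' ⪯ c⁻¹b`. With `c = g`, resp. `c = gs`, this turns `ν_B(g) ⪯ gs` and `ν_B(gs) ⪯ ν_B(g)` into
statements about `B`-projections: `s ⪯ π_B(g⁻¹)`, as `s` is a left descent of `g⁻¹` and lies in
`B`; and `s · π_B(g⁻¹) ⪯ π_B(s g⁻¹)`, as the left side is a suffix of `π_B(g⁻¹)`, hence in `B`,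
and lies below `s g⁻¹`. So `ν_B` respects every descent `gs ⪯ g`; since any `h ⪯ g` is reached
from `g` by a chain of descents, `ν_B` and all its iterates are monotone for `⪯`, and applying
`ν_B^k` to `ν_B(g) ⪯ gs ⪯ g` gives the claim.
-/

section WeakOrder

variable {cs : CoxeterSystem cm W}

theorem WLe.refl (cs : CoxeterSystem cm W) (g : W) : WLe cs g g := by
  simp [WLe]

theorem WLe.trans {a b c : W} (hab : WLe cs a b) (hbc : WLe cs b c) : WLe cs a c := by
  unfold WLe at *
  have h₁ := cs.length_mul_le (a⁻¹ * b) (b⁻¹ * c)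
  have h₂ := cs.length_mul_le a (a⁻¹ * c)
  simp only [mul_assoc, mul_inv_cancel_left] at h₁ h₂
  omega

theorem wle_iff_inv_mul_wle {a b c : W} (ha : WLe cs a c) (hb : WLe cs b c) :
    WLe cs a b ↔ WLe cs (c⁻¹ * b) (c⁻¹ * a) := by
  unfold WLe at *
  have hba : (c⁻¹ * b)⁻¹ * (c⁻¹ * a) = (a⁻¹ * b)⁻¹ := by group
  rw [hba, cs.length_inv, ← cs.length_inv (c⁻¹ * b), ← cs.length_inv (c⁻¹ * a)]
  simp only [mul_inv_rev, inv_inv]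
  omega

theorem WLe.inv_mul_wle_inv_mul {a b c : W} (hca : WLe cs c a) (hab : WLe cs a b) :
    WLe cs (c⁻¹ * a) (c⁻¹ * b) := by
  have hcb := hca.trans hab
  unfold WLe at *
  have hb : (c⁻¹ * a)⁻¹ * (c⁻¹ * b) = a⁻¹ * b := by group
  rw [hb]
  omega

theorem isSuffixOf_inv_mul_of_wle {a c : W} (h : WLe cs c a) : IsSuffixOf cs (c⁻¹ * a) a :=
  ⟨c, (mul_inv_cancel_left c a).symm, h.symm⟩

theorem simple_wle_of_isLeftDescent {x : W} {i : ι} (h : cs.IsLeftDescent x i) :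
    WLe cs (cs.simple i) x := by
  have := cs.isLeftDescent_iff.mp h
  unfold WLe
  rw [cs.inv_simple, cs.length_simple]
  omega

theorem mul_simple_wle_of_isRightDescent {g : W} {i : ι} (h : cs.IsRightDescent g i) :
    WLe cs (g * cs.simple i) g := by
  have := cs.isRightDescent_iff.mp h
  unfold WLe
  rw [mul_inv_rev, inv_mul_cancel_right, cs.inv_simple, cs.length_simple]
  omega

theorem exists_isRightDescent_wle_mul_simple {a b : W} (h : WLe cs a b) (hne : a ≠ b) :
    ∃ i, cs.IsRightDescent b i ∧ WLe cs a (b * cs.simple i) := by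
  obtain ⟨i, hi⟩ := cs.exists_rightDescent_of_ne_one fun h₁ => hne (inv_mul_eq_one.mp h₁)
  have hdesc := cs.isRightDescent_iff.mp hi
  have hle := cs.length_mul_le a (a⁻¹ * b * cs.simple i)
  have hstep := cs.length_mul_simple b i
  rw [mul_assoc, mul_inv_cancel_left] at hle
  rw [mul_assoc] at hdesc
  unfold WLe at h
  refine ⟨i, cs.isRightDescent_iff.mpr (by omega), ?_⟩
  unfold WLe
  omega

theorem wle_map_of_isRightDescent (f : W → W)
    (hf : ∀ g i, cs.IsRightDescent g i → WLe cs (f (g * cs.simple i)) (f g))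
    {a b : W} (h : WLe cs a b) : WLe cs (f a) (f b) := by
  induction hn : cs.length b using Nat.strong_induction_on generalizing b with
  | _ n ih =>
    by_cases hab : a = b
    · subst hab
      exact WLe.refl cs (f a)
    obtain ⟨i, hi, hai⟩ := exists_isRightDescent_wle_mul_simple h hab
    exact (ih _ (hn ▸ hi) hai rfl).trans (hf b i hi)

end WeakOrder

section Projection

variable {cs : CoxeterSystem cm W} {B : Set W} {π : W → W}

theorem IsGarsideProjection.wle_self (hπ : IsGarsideProjection cs B π) (x : W) :
    WLe cs (π x) x :=
  (hπ x).2.2 x fun _ hb => hb.2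

theorem IsGarsideProjection.wle_of_mem (hπ : IsGarsideProjection cs B π) {b x : W}
    (hb : b ∈ B) (h : WLe cs b x) : WLe cs b (π x) :=
  (hπ x).2.1 b ⟨hb, h⟩

theorem IsGarsideProjection.simple_wle (hπ : IsGarsideProjection cs B π)
    (hB : IsGarsideShadow cs B) {x : W} {i : ι} (h : cs.IsLeftDescent x i) :
    WLe cs (cs.simple i) (π x) :=
  hπ.wle_of_mem (hB.1 i) (simple_wle_of_isLeftDescent h)

theorem IsGarsideProjection.simple_mul_wle (hπ : IsGarsideProjection cs B π)
    (hB : IsGarsideShadow cs B) {x : W} {i : ι} (h : cs.IsLeftDescent x i) :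
    WLe cs (cs.simple i * π x) (π (cs.simple i * x)) := by
  have hi := hπ.simple_wle hB h
  have hsuffix := isSuffixOf_inv_mul_of_wle hi
  have hbelow := hi.inv_mul_wle_inv_mul (hπ.wle_self x)
  rw [cs.inv_simple] at hsuffix hbelow
  exact hπ.wle_of_mem (hB.2.2 _ (hπ x).1 _ hsuffix) hbelow

end Projection

section Voracious

variable {cs : CoxeterSystem cm W} {B : Set W} {π : W → W}

theorem inv_mul_vor (π : W → W) (g : W) : g⁻¹ * vor π g = π g⁻¹ := by
  simp [vor]

theorem vor_wle_self (hπ : IsGarsideProjection cs B π) (g : W) : WLe cs (vor π g) g := by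
  have h := hπ.wle_self g⁻¹
  unfold WLe vor at *
  rw [← cs.length_inv (g * π g⁻¹), ← cs.length_inv ((g * π g⁻¹)⁻¹ * g)]
  rw [cs.length_inv g] at h
  simp only [mul_inv_rev, inv_inv, inv_mul_cancel_left] at h ⊢
  omega

theorem vor_wle_mul_simple (hB : IsGarsideShadow cs B) (hπ : IsGarsideProjection cs B π)
    {g : W} {i : ι} (h : cs.IsRightDescent g i) : WLe cs (vor π g) (g * cs.simple i) := by
  refine (wle_iff_inv_mul_wle (vor_wle_self hπ g) (mul_simple_wle_of_isRightDescent h)).mpr ?_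
  rw [inv_mul_vor, inv_mul_cancel_left]
  exact hπ.simple_wle hB (cs.isLeftDescent_inv_iff.mpr h)

theorem vor_mul_simple_wle_vor (hB : IsGarsideShadow cs B) (hπ : IsGarsideProjection cs B π)
    {g : W} {i : ι} (h : cs.IsRightDescent g i) :
    WLe cs (vor π (g * cs.simple i)) (vor π g) := by
  refine (wle_iff_inv_mul_wle (vor_wle_self hπ _) (vor_wle_mul_simple hB hπ h)).mpr ?_
  have hinv : (g * cs.simple i)⁻¹ = cs.simple i * g⁻¹ := by rw [mul_inv_rev, cs.inv_simple]
  rw [inv_mul_vor, hinv, vor, ← mul_assoc, inv_mul_cancel_right]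
  exact hπ.simple_mul_wle hB (cs.isLeftDescent_inv_iff.mpr h)

theorem iterate_vor_wle_iterate_vor (hB : IsGarsideShadow cs B)
    (hπ : IsGarsideProjection cs B π) (k : ℕ) {a b : W} (h : WLe cs a b) :
    WLe cs ((vor π)^[k] a) ((vor π)^[k] b) := by
  induction k generalizing a b with
  | zero => exact h
  | succ k ih =>
    simp only [Function.iterate_succ_apply]
    exact ih (wle_map_of_isRightDescent (vor π)
      (fun _ _ hi => vor_mul_simple_wle_vor hB hπ hi) h)

end Voracious

theorem vor_iterate_interleave_general (cs : CoxeterSystem cm W)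
    (B : Set W) (hB : IsGarsideShadow cs B)
    (piB : W → W) (hpi : IsGarsideProjection cs B piB)
    (g : W) (s : ι) (hs : cs.length (g * cs.simple s) < cs.length g) :
    ∀ k : ℕ, WLe cs ((vor piB)^[k + 1] g) ((vor piB)^[k] (g * cs.simple s)) ∧
      WLe cs ((vor piB)^[k] (g * cs.simple s)) ((vor piB)^[k] g) := by
  intro k
  rw [Function.iterate_succ_apply]
  exact ⟨iterate_vor_wle_iterate_vor hB hpi k (vor_wle_mul_simple hB hpi hs),
    iterate_vor_wle_iterate_vor hB hpi k (mul_simple_wle_of_isRightDescent hs)⟩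

/-- If `ℓ(gs) < ℓ(g)` for `s ∈ S`, then for every `k ≥ 0` we have
`ν_B^{k+1}(g) ⪯ ν_B^k(gs) ⪯ ν_B^k(g)`. -/
theorem vor_iterate_interleave [Finite ι] (cs : CoxeterSystem cm W)
    (B : Set W) (hB : IsGarsideShadow cs B)
    (piB : W → W) (hpi : IsGarsideProjection cs B piB)
    (g : W) (s : ι) (hs : cs.length (g * cs.simple s) < cs.length g) :
    ∀ k : ℕ, WLe cs ((vor piB)^[k + 1] g) ((vor piB)^[k] (g * cs.simple s)) ∧
      WLe cs ((vor piB)^[k] (g * cs.simple s)) ((vor piB)^[k] g) :=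
  vor_iterate_interleave_general cs B hB piB hpi g s hs
end
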